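/- Let C be a nonempty closed convex subset of a real Hilbert space H and let V be a closed linear subspace of H. Then there exists a closed convex set D with P_C + P_V = P_D if and only if C ⊥ V (every element of C is orthogonal to every element of V); in that case D = C + V and P_C + P_V = P_{C+V}. -/

import Mathlib

/-!
If `C ⊥ V`, write `x - (c + v) = (x - Pv x - c) + (Pv x - v)`: the two summands lie in `Vᗮ` and
`V`, so Pythagoras shows that `Pc x + Pv x` is the nearest point of `C + V`. Conversely, if
`Pc + Pv` is the projection onto some `D`, then it fixes `c + Pv c` for `c ∈ C`, and the
variational inequality of `Pc` at that point forces `Pv c = 0`, i.e. `c ⊥ V`. A set `D` is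
recovered from its projection as the range, and it is automatically nonempty and closed.
-/

open RealInnerProductSpace Pointwise

variable {H : Type*} [NormedAddCommGroup H] [InnerProductSpace ℝ H] [CompleteSpace H]

/-- `P` is the metric projection (nearest-point map) onto `C`. -/
def IsProjOn (C : Set H) (P : H → H) : Prop :=
  ∀ x, P x ∈ C ∧ ∀ y ∈ C, ‖x - P x‖ ≤ ‖x - y‖

theorem Submodule.norm_add_sq_of_mem_orthogonal {E : Type*} [NormedAddCommGroup E]
    [InnerProductSpace ℝ E] {K : Submodule ℝ E} {a b : E} (ha : a ∈ Kᗮ) (hb : b ∈ K) :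
    ‖a + b‖ ^ 2 = ‖a‖ ^ 2 + ‖b‖ ^ 2 := by
  simp only [sq]
  exact norm_add_sq_eq_norm_sq_add_norm_sq_real (K.inner_left_of_mem_orthogonal hb ha)

namespace IsProjOn

section Normed

variable {E : Type*} [NormedAddCommGroup E] {D : Set E} {P : E → E}

theorem apply_eq_self (h : IsProjOn D P) {d : E} (hd : d ∈ D) : P d = d := by
  have hle := (h d).2 d hd
  rw [sub_self, norm_zero, norm_le_zero_iff, sub_eq_zero] at hle
  exact hle.symm

theorem range_eq (h : IsProjOn D P) : Set.range P = D :=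
  Set.Subset.antisymm (Set.range_subset_iff.2 fun x => (h x).1)
    fun d hd => ⟨d, h.apply_eq_self hd⟩

theorem nonempty (h : IsProjOn D P) : D.Nonempty :=
  ⟨P 0, (h 0).1⟩

theorem isClosed (h : IsProjOn D P) : IsClosed D := by
  refine isClosed_of_closure_subset fun x hx => ?_
  have hdist : ‖x - P x‖ ≤ 0 := by
    refine le_of_forall_pos_le_add fun ε hε => ?_
    obtain ⟨y, hy, hxy⟩ := Metric.mem_closure_iff.1 hx ε hε
    rw [zero_add]
    exact ((h x).2 y hy).trans (dist_eq_norm x y ▸ hxy.le)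
  rw [norm_le_zero_iff, sub_eq_zero] at hdist
  exact hdist ▸ (h x).1

end Normed

variable {E : Type*} [NormedAddCommGroup E] [InnerProductSpace ℝ E]

section Convex

variable {D : Set E} {P : E → E}

theorem inner_sub_le_zero (h : IsProjOn D P) (hD : Convex ℝ D) (x : E) {c : E} (hc : c ∈ D) :
    ⟪x - P x, c - P x⟫ ≤ 0 := by
  have : Nonempty D := ⟨⟨P x, (h x).1⟩⟩
  have hinf : ‖x - P x‖ = ⨅ w : D, ‖x - w‖ :=
    le_antisymm (le_ciInf fun w => (h x).2 w w.2)
      (ciInf_le (⟨0, Set.forall_mem_range.2 fun _ => norm_nonneg _⟩ : BddBelow _)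
        (⟨P x, (h x).1⟩ : D))
  exact (norm_eq_iInf_iff_real_inner_le_zero hD (h x).1).1 hinf c hc

end Convex

section Subspace

variable {V : Submodule ℝ E} {P : E → E}

theorem sub_mem_orthogonal (h : IsProjOn (V : Set E) P) (x : E) : x - P x ∈ Vᗮ := by
  refine (Submodule.mem_orthogonal' V _).2 fun v hv => le_antisymm ?_ ?_
  · simpa using h.inner_sub_le_zero V.convex x (V.add_mem (h x).1 hv)
  · simpa [inner_neg_right] using h.inner_sub_le_zero V.convex x (V.sub_mem (h x).1 hv)

theorem apply_add_of_mem (h : IsProjOn (V : Set E) P) (x : E) {v : E} (hv : v ∈ V) :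
    P (x + v) = P x + v := by
  have hV : P (x + v) - (P x + v) ∈ V := V.sub_mem (h _).1 (V.add_mem (h x).1 hv)
  have hVperp : P (x + v) - (P x + v) ∈ Vᗮ := by
    convert Vᗮ.sub_mem (h.sub_mem_orthogonal x) (h.sub_mem_orthogonal (x + v)) using 1
    abel
  exact sub_eq_zero.1 (Submodule.disjoint_def.1 V.orthogonal_disjoint _ hV hVperp)

end Subspace

variable {C : Set E} {V : Submodule ℝ E} {Pc Pv : E → E}

theorem add (hPc : IsProjOn C Pc) (hPv : IsProjOn (V : Set E) Pv) (hCV : C ⊆ (Vᗮ : Set E)) :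
    IsProjOn (C + (V : Set E)) (fun x => Pc x + Pv x) := by
  intro x
  refine ⟨Set.add_mem_add (hPc x).1 (hPv x).1, ?_⟩
  rintro _ ⟨c, hc, v, hv, rfl⟩
  have hw : x - Pv x ∈ Vᗮ := hPv.sub_mem_orthogonal x
  have hsplit : ∀ c' ∈ C, ∀ v' ∈ V,
      ‖x - (c' + v')‖ ^ 2 = ‖x - Pv x - c'‖ ^ 2 + ‖Pv x - v'‖ ^ 2 := by
    intro c' hc' v' hv'
    rw [← Submodule.norm_add_sq_of_mem_orthogonal (Vᗮ.sub_mem hw (hCV hc'))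
      (V.sub_mem (hPv x).1 hv')]
    congr 2
    abel
  have hsplit₀ : ∀ c' ∈ C, ‖x - c'‖ ^ 2 = ‖x - Pv x - c'‖ ^ 2 + ‖Pv x‖ ^ 2 :=
    fun c' hc' => by simpa using hsplit c' hc' 0 V.zero_mem
  have hnear : ‖x - Pc x‖ ^ 2 ≤ ‖x - c‖ ^ 2 := by gcongr; exact (hPc x).2 c hc
  rw [hsplit₀ _ (hPc x).1, hsplit₀ c hc] at hnear
  rw [← sq_le_sq₀ (norm_nonneg _) (norm_nonneg _), hsplit c hc v hv,
    show x - (Pc x + Pv x) = x - Pv x - Pc x by abel]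
  nlinarith [sq_nonneg ‖Pv x - v‖]

theorem subset_orthogonal_of_add {D : Set E} (hD : IsProjOn D (fun x => Pc x + Pv x))
    (hPc : IsProjOn C Pc) (hC : Convex ℝ C) (hPv : IsProjOn (V : Set E) Pv) :
    C ⊆ (Vᗮ : Set E) := by
  intro c hc
  have hfix : Pc (c + Pv c) + Pv (c + Pv c) = c + Pv c := by
    simpa only [hPc.apply_eq_self hc] using hD.apply_eq_self (hD c).1
  rw [hPv.apply_add_of_mem c (hPv c).1] at hfix
  have hPcd : Pc (c + Pv c) = c - Pv c := by
    rw [eq_sub_of_add_eq hfix]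
    abel
  have hvar := hPc.inner_sub_le_zero hC (c + Pv c) hc
  rw [hPcd, show c + Pv c - (c - Pv c) = Pv c + Pv c by abel,
    show c - (c - Pv c) = Pv c by abel, inner_add_left] at hvar
  have hPvc : Pv c = 0 := real_inner_self_nonpos.1 (by linarith)
  simpa [hPvc] using hPv.sub_mem_orthogonal c

end IsProjOn

theorem stmt19_general (C : Set H)
    (hCcv : Convex ℝ C)
    (V : Submodule ℝ H)
    (Pc Pv : H → H) (hPc : IsProjOn C Pc) (hPv : IsProjOn (V : Set H) Pv) :
    ((∃ D : Set H, D.Nonempty ∧ IsClosed D ∧ Convex ℝ D ∧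
        IsProjOn D (fun x => Pc x + Pv x))
      ↔ ∀ c ∈ C, ∀ v ∈ (V : Set H), ⟪c, v⟫ = 0)
    ∧ ((∀ c ∈ C, ∀ v ∈ (V : Set H), ⟪c, v⟫ = 0) →
        (∀ D : Set H, D.Nonempty → IsClosed D → Convex ℝ D →
            IsProjOn D (fun x => Pc x + Pv x) → D = C + (V : Set H)) ∧
          IsProjOn (C + (V : Set H)) (fun x => Pc x + Pv x)) := by
  have hperp_iff : (∀ c ∈ C, ∀ v ∈ (V : Set H), ⟪c, v⟫ = 0) ↔ C ⊆ (Vᗮ : Set H) :=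
    forall₂_congr fun c _ => (Submodule.mem_orthogonal' V c).symm
  rw [hperp_iff]
  refine ⟨⟨fun ⟨D, _, _, _, hD⟩ => hD.subset_orthogonal_of_add hPc hCcv hPv,
    fun hCV => ?_⟩, fun hCV => ?_⟩
  all_goals have hsum := hPc.add hPv hCV
  · exact ⟨_, hsum.nonempty, hsum.isClosed, hCcv.add V.convex, hsum⟩
  · exact ⟨fun D _ _ _ hD => hD.range_eq.symm.trans hsum.range_eq, hsum⟩

theorem stmt19 (C : Set H)
    (hCne : C.Nonempty) (hCcl : IsClosed C) (hCcv : Convex ℝ C)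
    (V : Submodule ℝ H) (hVcl : IsClosed (V : Set H))
    (Pc Pv : H → H) (hPc : IsProjOn C Pc) (hPv : IsProjOn (V : Set H) Pv) :
    ((∃ D : Set H, D.Nonempty ∧ IsClosed D ∧ Convex ℝ D ∧
        IsProjOn D (fun x => Pc x + Pv x))
      ↔ ∀ c ∈ C, ∀ v ∈ (V : Set H), ⟪c, v⟫ = 0)
    ∧ ((∀ c ∈ C, ∀ v ∈ (V : Set H), ⟪c, v⟫ = 0) →
        (∀ D : Set H, D.Nonempty → IsClosed D → Convex ℝ D →
            IsProjOn D (fun x => Pc x + Pv x) → D = C + (V : Set H)) ∧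
          IsProjOn (C + (V : Set H)) (fun x => Pc x + Pv x)) :=
  stmt19_general C hCcv V Pc Pv hPc hPv
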